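/- arXiv:2602.07851 — 5 statements merged into one kernel-verified Lean document; each statement's English description precedes it below -/
import Mathlib

section
/- Suppose 𝒜 ∩ ℬ = ∅ and let (u_𝒜, u_ℬ) be a best approximation pair for 𝒜 and ℬ. Then there exist real numbers c₁, c₂, not both zero, such that u_𝒜(t) − u_ℬ(t) = c₁·t + c₂ for a.e. t ∈ [0,1]; moreover u_ℬ(t) = a for a.e. t ∈ [0,1] with c₁·t + c₂ > 0, and u_ℬ(t) = −a for a.e. t ∈ [0,1] with c₁·t + c₂ < 0. In other words, the optimal gap function is affine and the best approximation control in ℬ is of bang–bang type with at most one switching. -/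
/-! Write g = u_𝒜 - u_ℬ. Since u_𝒜 is the point of the affine set 𝒜 nearest to u_ℬ, g is
orthogonal to the direction of 𝒜, which is the orthogonal complement of span {1, 1 - t}; hence g
lies in that span, i.e. it is affine in t. Since u_ℬ is the point of the convex box ℬ nearest to
u_𝒜, we have ⟪g, y - u_ℬ⟫ ≤ 0 for all y ∈ ℬ. Testing with y = a · sign g gives
∫ g (a · sign g - u_ℬ) ≤ 0 although the integrand is pointwise nonnegative, so it vanishes a.e.,
which forces u_ℬ = a where g > 0 and u_ℬ = -a where g < 0. Finally g ≠ 0 because 𝒜 ∩ ℬ = ∅. -/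

open MeasureTheory

/-- The measure on ℝ representing integration over the interval [0,1]. -/
noncomputable def mu01 : Measure ℝ := volume.restrict (Set.Icc 0 1)

/-- The affine set 𝒜 of controls in L²([0,1],ℝ) steering the double integrator
from (s₀, v₀) to (s_f, v_f). -/
def setA (s0 sf v0 vf : ℝ) : Set (Lp ℝ 2 mu01) :=
  {u | (∫ t, u t ∂mu01) = vf - v0 ∧ (∫ t, (1 - t) * u t ∂mu01) = sf - s0 - v0}

/-- The box ℬ of controls bounded in absolute value by `a` a.e. on [0,1]. -/
def setB (a : ℝ) : Set (Lp ℝ 2 mu01) :=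
  {u | ∀ᵐ t ∂mu01, |u t| ≤ a}

open scoped RealInnerProductSpace

lemma norm_sub_eq_iInf_of_forall_norm_sub_le {E : Type*} [SeminormedAddCommGroup E] {K : Set E}
    {u v : E} (hv : v ∈ K)
    (h : ∀ w ∈ K, ‖u - v‖ ≤ ‖u - w‖) : ‖u - v‖ = ⨅ w : K, ‖u - w‖ := by
  have : Nonempty K := ⟨⟨v, hv⟩⟩
  exact le_antisymm (le_ciInf fun w => h w w.2)
    (ciInf_le ⟨0, Set.forall_mem_range.2 fun _ => norm_nonneg _⟩ (⟨v, hv⟩ : K))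

section Projection

variable {F : Type*} [NormedAddCommGroup F] [InnerProductSpace ℝ F]

lemma Submodule.mem_of_forall_norm_le_norm_add (V : Submodule ℝ F) [V.HasOrthogonalProjection]
    {g : F} (h : ∀ w ∈ Vᗮ, ‖g‖ ≤ ‖g + w‖) : g ∈ V := by
  have hmin : ‖g - 0‖ = ⨅ w : (Vᗮ : Set F), ‖g - w‖ :=
    norm_sub_eq_iInf_of_forall_norm_sub_le Vᗮ.zero_mem fun w hw => by
      simpa [sub_eq_add_neg] using h (-w) (Vᗮ.neg_mem hw)
  rw [Submodule.norm_eq_iInf_iff_real_inner_eq_zero _ Vᗮ.zero_mem] at hmin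
  rw [← V.orthogonal_orthogonal, Submodule.mem_orthogonal]
  intro w hw
  simpa [real_inner_comm] using hmin w hw

end Projection

section L2

variable {α : Type*} [MeasurableSpace α] {μ : Measure α}

lemma L2.real_inner_ae_eq_mul (f g : Lp ℝ 2 μ) :
    (fun t => inner ℝ (f t) (g t)) =ᵐ[μ] fun t => f t * g t :=
  .of_forall fun t => by simp [mul_comm]

lemma L2.real_inner_eq_integral_mul (f g : Lp ℝ 2 μ) : ⟪f, g⟫ = ∫ t, f t * g t ∂μ := by
  rw [L2.inner_def]
  exact integral_congr_ae (L2.real_inner_ae_eq_mul f g)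

lemma L2.integrable_mul (f g : Lp ℝ 2 μ) : Integrable (fun t => f t * g t) μ :=
  (L2.integrable_inner f g).congr (L2.real_inner_ae_eq_mul f g)

end L2

lemma measurable_sign_real : Measurable fun x : ℝ => (SignType.sign x : ℝ) := by
  have hcast : Monotone (fun s : SignType => (s : ℝ)) := by
    intro s t h
    cases s <;> cases t <;> first | exact absurd h (by decide) | norm_num
  exact (hcast.comp SignType.sign.monotone).measurable

lemma abs_sign_le_one (x : ℝ) : |(SignType.sign x : ℝ)| ≤ 1 := by
  rcases lt_trichotomy x 0 with h | rfl | h <;> simp [*]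

section Box

variable {α : Type*} [MeasurableSpace α] {μ : Measure α} {a : ℝ}

variable (μ a) in
def l2Box : Set (Lp ℝ 2 μ) := {u | ∀ᵐ t ∂μ, |u t| ≤ a}

lemma convex_l2Box : Convex ℝ (l2Box μ a) := by
  intro u hu v hv s r hs hr hsr
  filter_upwards [hu, hv, Lp.coeFn_add (s • u) (r • v), Lp.coeFn_smul s u, Lp.coeFn_smul r v]
    with t hut hvt hadd hsu hrv
  rw [hadd, Pi.add_apply, hsu, hrv, Pi.smul_apply, Pi.smul_apply, smul_eq_mul, smul_eq_mul]
  calc |s * u t + r * v t| ≤ s * |u t| + r * |v t| := by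
        refine (abs_add_le _ _).trans_eq ?_
        rw [abs_mul, abs_mul, abs_of_nonneg hs, abs_of_nonneg hr]
    _ ≤ s * a + r * a := by gcongr
    _ = a := by rw [← add_mul, hsr, one_mul]

lemma mul_sign_sub_nonneg {x b : ℝ} (hb : |b| ≤ a) : 0 ≤ x * (a * SignType.sign x - b) := by
  have : x * (a * SignType.sign x - b) = a * |x| - x * b := by
    rw [← self_mul_sign]; ring
  rw [this, sub_nonneg]
  calc x * b ≤ |x| * |b| := by rw [← abs_mul]; exact le_abs_self _
    _ ≤ |x| * a := by gcongr
    _ = a * |x| := mul_comm _ _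

lemma eq_of_mul_sign_sub_eq_zero {x b : ℝ} (h : x * (a * SignType.sign x - b) = 0) :
    (0 < x → b = a) ∧ (x < 0 → b = -a) := by
  refine ⟨fun hx => ?_, fun hx => ?_⟩
  · rw [sign_pos hx, SignType.coe_one, mul_one] at h
    exact (sub_eq_zero.1 ((mul_eq_zero.1 h).resolve_left hx.ne')).symm
  · rw [sign_neg hx, SignType.coe_neg_one, mul_neg_one] at h
    exact (sub_eq_zero.1 ((mul_eq_zero.1 h).resolve_left hx.ne)).symm

variable [IsFiniteMeasure μ]

lemma ae_bang_bang_of_inner_nonpos {g u : Lp ℝ 2 μ} (hu : u ∈ l2Box μ a)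
    (h : ∀ y ∈ l2Box μ a, ⟪g, y - u⟫ ≤ 0) :
    ∀ᵐ t ∂μ, (0 < g t → u t = a) ∧ (g t < 0 → u t = -a) := by
  have hbound (t : α) : |a * SignType.sign (g t)| ≤ |a| := by
    rw [abs_mul]
    exact mul_le_of_le_one_right (abs_nonneg a) (abs_sign_le_one _)
  have hy : MemLp (fun t => a * SignType.sign (g t)) 2 μ := by
    refine .of_bound ?_ |a| (.of_forall hbound)
    exact ((measurable_sign_real.comp_aemeasurable
      (Lp.aestronglyMeasurable g).aemeasurable).const_mul a).aestronglyMeasurable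
  have hy_mem : hy.toLp _ ∈ l2Box μ a := by
    filter_upwards [hu, hy.coeFn_toLp] with t ht hyt
    rw [hyt]
    exact (hbound t).trans_eq (abs_of_nonneg ((abs_nonneg _).trans ht))
  set f := fun t => g t * (a * SignType.sign (g t) - u t)
  have hf : (fun t => g t * (hy.toLp _ - u) t) =ᵐ[μ] f := by
    filter_upwards [Lp.coeFn_sub (hy.toLp _) u, hy.coeFn_toLp] with t hsub hyt
    simp only [f, hsub, Pi.sub_apply, hyt]
  have hf_nonneg : 0 ≤ᵐ[μ] f := by
    filter_upwards [hu] with t ht using mul_sign_sub_nonneg ht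
  have hf_zero : f =ᵐ[μ] 0 := by
    refine (integral_eq_zero_iff_of_nonneg_ae hf_nonneg ((L2.integrable_mul _ _).congr hf)).1 ?_
    refine le_antisymm ?_ (integral_nonneg_of_ae hf_nonneg)
    rw [← integral_congr_ae hf, ← L2.real_inner_eq_integral_mul]
    exact h _ hy_mem
  filter_upwards [hf_zero] with t ht using eq_of_mul_sign_sub_eq_zero ht

end Box

instance : IsFiniteMeasure mu01 := by unfold mu01; infer_instance

noncomputable def oneL2 : Lp ℝ 2 mu01 := Lp.const 2 mu01 1

lemma memLp_one_sub : MemLp (fun t : ℝ => 1 - t) 2 mu01 := by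
  refine .of_bound (by fun_prop) 1 ?_
  filter_upwards [ae_restrict_mem measurableSet_Icc] with t ht
  rw [Real.norm_eq_abs, abs_le]
  constructor <;> linarith [ht.1, ht.2]

noncomputable def oneSubL2 : Lp ℝ 2 mu01 := memLp_one_sub.toLp _

lemma coeFn_oneL2 : oneL2 =ᵐ[mu01] fun _ => 1 := Lp.coeFn_const 2 mu01 1

lemma coeFn_oneSubL2 : oneSubL2 =ᵐ[mu01] fun t => 1 - t := memLp_one_sub.coeFn_toLp

lemma inner_oneL2 (w : Lp ℝ 2 mu01) : ⟪oneL2, w⟫ = ∫ t, w t ∂mu01 := by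
  rw [L2.real_inner_eq_integral_mul]
  refine integral_congr_ae ?_
  filter_upwards [coeFn_oneL2] with t ht
  simp [ht]

lemma inner_oneSubL2 (w : Lp ℝ 2 mu01) : ⟪oneSubL2, w⟫ = ∫ t, (1 - t) * w t ∂mu01 := by
  rw [L2.real_inner_eq_integral_mul]
  refine integral_congr_ae ?_
  filter_upwards [coeFn_oneSubL2] with t ht
  simp [ht]

lemma mem_setA_iff {s0 sf v0 vf : ℝ} {x : Lp ℝ 2 mu01} :
    x ∈ setA s0 sf v0 vf ↔ ⟪oneL2, x⟫ = vf - v0 ∧ ⟪oneSubL2, x⟫ = sf - s0 - v0 := by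
  rw [inner_oneL2, inner_oneSubL2]
  rfl

lemma sub_mem_span_of_forall_norm_le {s0 sf v0 vf : ℝ} {uA uB : Lp ℝ 2 mu01}
    (huA : uA ∈ setA s0 sf v0 vf) (h : ∀ x ∈ setA s0 sf v0 vf, ‖uA - uB‖ ≤ ‖x - uB‖) :
    uA - uB ∈ Submodule.span ℝ {oneL2, oneSubL2} := by
  have : FiniteDimensional ℝ (Submodule.span ℝ {oneL2, oneSubL2}) :=
    FiniteDimensional.span_of_finite ℝ (Set.toFinite _)
  refine Submodule.mem_of_forall_norm_le_norm_add _ fun w hw => ?_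
  have h1 : ⟪oneL2, w⟫ = 0 :=
    (Submodule.mem_orthogonal _ w).1 hw _ (Submodule.subset_span (by simp))
  have h2 : ⟪oneSubL2, w⟫ = 0 :=
    (Submodule.mem_orthogonal _ w).1 hw _ (Submodule.subset_span (by simp))
  have hx : uA + w ∈ setA s0 sf v0 vf := by
    rw [mem_setA_iff] at huA ⊢
    simp [inner_add_right, h1, h2, huA]
  simpa [add_sub_right_comm] using h _ hx

lemma exists_ae_eq_affine_of_mem_span {g : Lp ℝ 2 mu01}
    (hg : g ∈ Submodule.span ℝ {oneL2, oneSubL2}) :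
    ∃ c1 c2 : ℝ, ∀ᵐ t ∂mu01, g t = c1 * t + c2 := by
  obtain ⟨c, d, rfl⟩ := Submodule.mem_span_pair.1 hg
  refine ⟨-d, c + d, ?_⟩
  filter_upwards [Lp.coeFn_add (c • oneL2) (d • oneSubL2), Lp.coeFn_smul c oneL2,
    Lp.coeFn_smul d oneSubL2, coeFn_oneL2, coeFn_oneSubL2] with t hadd hc hd h1 h2
  simp only [hadd, Pi.add_apply, hc, hd, Pi.smul_apply, smul_eq_mul, h1, h2]
  ring

theorem stmt_3_general (s0 sf v0 vf a : ℝ)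
    (hdisj : setA s0 sf v0 vf ∩ setB a = ∅)
    (uA uB : Lp ℝ 2 mu01)
    (huA : uA ∈ setA s0 sf v0 vf) (huB : uB ∈ setB a)
    (hbest : ∀ x ∈ setA s0 sf v0 vf, ∀ y ∈ setB a, ‖uA - uB‖ ≤ ‖x - y‖) :
    ∃ c1 c2 : ℝ, (c1 ≠ 0 ∨ c2 ≠ 0) ∧
      (∀ᵐ t ∂mu01, uA t - uB t = c1 * t + c2) ∧
      (∀ᵐ t ∂mu01, 0 < c1 * t + c2 → uB t = a) ∧
      (∀ᵐ t ∂mu01, c1 * t + c2 < 0 → uB t = -a) := by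
  obtain ⟨c1, c2, hgap⟩ := exists_ae_eq_affine_of_mem_span
    (sub_mem_span_of_forall_norm_le huA fun x hx => hbest x hx uB huB)
  have hbang := ae_bang_bang_of_inner_nonpos huB <|
    (norm_eq_iInf_iff_real_inner_le_zero convex_l2Box huB).1
      (norm_sub_eq_iInf_of_forall_norm_sub_le huB (hbest uA huA))
  refine ⟨c1, c2, ?_, ?_, ?_, ?_⟩
  · by_contra! hc
    have hAB : uA - uB = 0 := by
      rw [Lp.eq_zero_iff_ae_eq_zero]
      filter_upwards [hgap] with t ht
      rw [ht, hc.1, hc.2, Pi.zero_apply, zero_mul, add_zero]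
    exact (Set.eq_empty_iff_forall_notMem.1 hdisj) uA ⟨huA, sub_eq_zero.1 hAB ▸ huB⟩
  · filter_upwards [hgap, Lp.coeFn_sub uA uB] with t ht hsub
    rwa [hsub] at ht
  · filter_upwards [hgap, hbang] with t ht hb using fun hpos => hb.1 (by rwa [ht])
  · filter_upwards [hgap, hbang] with t ht hb using fun hneg => hb.2 (by rwa [ht])

/-- If 𝒜 ∩ ℬ = ∅ and (u_𝒜, u_ℬ) is a best approximation pair, then the gap function
is affine, u_𝒜 - u_ℬ = c₁·t + c₂ a.e. with (c₁, c₂) ≠ (0,0), and u_ℬ is bang–bang. -/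
theorem stmt_3 (s0 sf v0 vf a : ℝ) (ha : 0 < a)
    (hdisj : setA s0 sf v0 vf ∩ setB a = ∅)
    (uA uB : Lp ℝ 2 mu01)
    (huA : uA ∈ setA s0 sf v0 vf) (huB : uB ∈ setB a)
    (hbest : ∀ x ∈ setA s0 sf v0 vf, ∀ y ∈ setB a, ‖uA - uB‖ ≤ ‖x - y‖) :
    ∃ c1 c2 : ℝ, (c1 ≠ 0 ∨ c2 ≠ 0) ∧
      (∀ᵐ t ∂mu01, uA t - uB t = c1 * t + c2) ∧
      (∀ᵐ t ∂mu01, 0 < c1 * t + c2 → uB t = a) ∧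
      (∀ᵐ t ∂mu01, c1 * t + c2 < 0 → uB t = -a) :=
  stmt_3_general s0 sf v0 vf a hdisj uA uB huA huB hbest
end

section
/- Suppose s_f − s₀ = (v₀ + v_f)/2 and v₀ ≠ v_f. Then for every a > 0, the intersection 𝒜 ∩ ℬ is nonempty if and only if a ≥ |v_f − v₀|. That is, the critical feasibility bound is a_c = |v_f − v₀|. -/
/-!
Necessity: for any admissible control, `|v_f - v₀| = |∫ u| ≤ ∫ |u| ≤ a`.
Sufficiency: the constant control `u ≡ v_f - v₀` has the right integral, and since
`∫₀¹ (1 - t) dt = 1/2` its second moment is `(v_f - v₀)/2 = s_f - s₀ - v₀` exactly under the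
hypothesis `s_f - s₀ = (v₀ + v_f)/2`; it lies in the box as soon as `|v_f - v₀| ≤ a`.
-/

open MeasureTheory

instance : IsProbabilityMeasure mu01 :=
  ⟨by rw [mu01, Measure.restrict_apply_univ, Real.volume_Icc]; norm_num⟩

lemma integral_mu01_eq_intervalIntegral (f : ℝ → ℝ) :
    ∫ t, f t ∂mu01 = ∫ t in (0 : ℝ)..1, f t := by
  rw [mu01, intervalIntegral.integral_of_le zero_le_one, integral_Icc_eq_integral_Ioc]

lemma integral_mu01_const (c : ℝ) : ∫ _t, c ∂mu01 = c := by
  simp [integral_const, probReal_univ]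

lemma integral_mu01_one_sub_mul_const (c : ℝ) : ∫ t, (1 - t) * c ∂mu01 = c / 2 := by
  rw [integral_mu01_eq_intervalIntegral, intervalIntegral.integral_mul_const,
    intervalIntegral.integral_sub intervalIntegrable_const intervalIntegral.intervalIntegrable_id]
  simp only [intervalIntegral.integral_const, integral_id]
  ring

lemma abs_le_of_mem_setA_inter_setB {s0 sf v0 vf a : ℝ} {u : Lp ℝ 2 mu01}
    (hu : u ∈ setA s0 sf v0 vf ∩ setB a) : |vf - v0| ≤ a := by
  obtain ⟨⟨hint, -⟩, hbox : ∀ᵐ t ∂mu01, ‖u t‖ ≤ a⟩ := hu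
  simpa [← hint, probReal_univ] using norm_integral_le_of_norm_le_const hbox

lemma const_mem_setA {s0 sf v0 vf : ℝ} (hs : sf - s0 = (v0 + vf) / 2) :
    Lp.const 2 mu01 (vf - v0) ∈ setA s0 sf v0 vf := by
  have hcoe := Lp.coeFn_const 2 mu01 (vf - v0)
  constructor
  · rw [integral_congr_ae hcoe]
    exact integral_mu01_const _
  · have hmul : (fun t => (1 - t) * Lp.const 2 mu01 (vf - v0) t) =ᵐ[mu01]
        fun t => (1 - t) * (vf - v0) := by
      filter_upwards [hcoe] with t ht
      rw [ht, Function.const_apply]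
    rw [integral_congr_ae hmul, integral_mu01_one_sub_mul_const, hs]
    ring

lemma const_mem_setB {c a : ℝ} (hc : |c| ≤ a) : Lp.const 2 mu01 c ∈ setB a := by
  filter_upwards [Lp.coeFn_const 2 mu01 c] with t ht
  rwa [ht, Function.const_apply]

theorem stmt_6_general (s0 sf v0 vf : ℝ) (hs : sf - s0 = (v0 + vf) / 2) :
    ∀ a : ℝ, 0 < a →
      ((setA s0 sf v0 vf ∩ setB a).Nonempty ↔ |vf - v0| ≤ a) := by
  intro a _
  exact ⟨fun ⟨_, hu⟩ => abs_le_of_mem_setA_inter_setB hu,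
    fun hle => ⟨_, const_mem_setA hs, const_mem_setB hle⟩⟩

/-- Critical feasibility bound, case s_f - s₀ = (v₀+v_f)/2 and v₀ ≠ v_f:
a_c = |v_f - v₀|. -/
theorem stmt_6 (s0 sf v0 vf : ℝ) (hs : sf - s0 = (v0 + vf) / 2) (hv : v0 ≠ vf) :
    ∀ a : ℝ, 0 < a →
      ((setA s0 sf v0 vf ∩ setB a).Nonempty ↔ |vf - v0| ≤ a) :=
  stmt_6_general s0 sf v0 vf hs
end

section
/- Suppose v₀ = v_f, a > 0, and |4·(v_f + s₀ − s_f)| > a. Let σ := 1 if 4·(v_f + s₀ − s_f) > a and σ := −1 if 4·(v_f + s₀ − s_f) < −a, and set r := −σ·a and c₁ := 12·(v_f + s₀ − s_f) − 3·σ·a. Then the pair (u_𝒜, u_ℬ) defined by u_ℬ(t) = r for t ∈ [0, 1/2), u_ℬ(t) = −r for t ∈ [1/2, 1], and u_𝒜(t) = u_ℬ(t) + c₁·(t − 1/2) for t ∈ [0,1], is a best approximation pair for 𝒜 and ℬ. -/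
/-!
Write `d := u_𝒜 - u_ℬ = c₁ (t - 1/2)`. Since `t - 1/2 = 1/2 - (1 - t)`, the pairing `⟪d, x⟫` only
depends on the two moments that define `𝒜`, so it is the same for every `x ∈ 𝒜`. On the other hand
the choice of `σ` makes `σ c₁ = |c₁|`, so `d(t) u_ℬ(t) = a |d(t)|` and `u_ℬ` maximises `⟪d, ·⟫`
over `ℬ` pointwise. Hence `⟪d, x - y⟫ ≥ ⟪d, u_𝒜 - u_ℬ⟫ = ‖d‖²` for all `x ∈ 𝒜`, `y ∈ ℬ`, and
Cauchy–Schwarz gives `‖d‖ ≤ ‖x - y‖`.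
-/

open MeasureTheory

open Set

theorem norm_sub_le_norm_sub_of_inner_nonneg {E : Type*} [NormedAddCommGroup E]
    [InnerProductSpace ℝ E] {a b x y : E} (hx : 0 ≤ inner ℝ (a - b) (x - a))
    (hy : 0 ≤ inner ℝ (a - b) (b - y)) : ‖a - b‖ ≤ ‖x - y‖ := by
  have hsq : ‖a - b‖ * ‖a - b‖ ≤ ‖a - b‖ * ‖x - y‖ :=
    calc ‖a - b‖ * ‖a - b‖ = inner ℝ (a - b) (a - b) := (real_inner_self_eq_norm_mul_norm _).symm
      _ ≤ inner ℝ (a - b) (x - a) + inner ℝ (a - b) (a - b) + inner ℝ (a - b) (b - y) := by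
        linarith
      _ = inner ℝ (a - b) (x - y) := by
        rw [← inner_add_right, ← inner_add_right]; congr 1; abel
      _ ≤ ‖a - b‖ * ‖x - y‖ := real_inner_le_norm _ _
  rcases (norm_nonneg (a - b)).eq_or_lt with h | h
  · rw [← h]; exact norm_nonneg _
  · exact le_of_mul_le_mul_left hsq h

theorem integral_quadratic (p q r x y : ℝ) :
    ∫ t in x..y, (p * t ^ 2 + q * t + r) =
      p * (y ^ 3 - x ^ 3) / 3 + q * (y ^ 2 - x ^ 2) / 2 + r * (y - x) := by
  have hp : IntervalIntegrable (fun t : ℝ => p * t ^ 2) volume x y :=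
    (continuous_const.mul (continuous_pow 2)).intervalIntegrable x y
  have hq : IntervalIntegrable (fun t : ℝ => q * t) volume x y :=
    (continuous_const.mul continuous_id).intervalIntegrable x y
  rw [intervalIntegral.integral_add (hp.add hq) intervalIntegrable_const,
    intervalIntegral.integral_add hp hq, intervalIntegral.integral_const_mul,
    intervalIntegral.integral_const_mul, integral_pow, integral_id, intervalIntegral.integral_const,
    smul_eq_mul]
  push_cast
  ring

instance inst_s8 : IsFiniteMeasure mu01 := by
  unfold mu01; infer_instance

theorem Continuous.memLp_mu01 {f : ℝ → ℝ} (hf : Continuous f) (p : ENNReal) :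
    MemLp f p mu01 := by
  obtain ⟨C, hC⟩ := (isCompact_Icc (a := (0 : ℝ)) (b := 1)).exists_bound_of_continuousOn
    hf.continuousOn
  exact MemLp.of_bound hf.aestronglyMeasurable C (ae_restrict_of_forall_mem measurableSet_Icc hC)

theorem integrable_continuous_mul_coeFn {f : ℝ → ℝ} (hf : Continuous f) (u : Lp ℝ 2 mu01) :
    Integrable (fun t => f t * u t) mu01 :=
  IntegrableOn.continuousOn_mul hf.continuousOn ((Lp.memLp u).integrable one_le_two)
    isCompact_Icc

theorem integral_mu01_ite {F G : ℝ → ℝ} (hF : Continuous F) (hG : Continuous G) {s : ℝ}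
    (hs : s ∈ Icc (0 : ℝ) 1) :
    ∫ t, (if t < s then F t else G t) ∂mu01 = (∫ t in 0..s, F t) + ∫ t in s..1, G t := by
  have hIco : EqOn (fun t => if t < s then F t else G t) F (Ico 0 s) := fun t ht => if_pos ht.2
  have hIcc : EqOn (fun t => if t < s then F t else G t) G (Icc s 1) :=
    fun t ht => if_neg (not_lt.2 ht.1)
  have hdisj : Disjoint (Ico 0 s) (Icc s 1) :=
    disjoint_left.2 fun t h₁ h₂ => (h₁.2.trans_le h₂.1).false
  rw [mu01, ← Ico_union_Icc_eq_Icc hs.1 hs.2, setIntegral_union hdisj measurableSet_Icc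
      ((hF.integrableOn_Icc.mono_set Ico_subset_Icc_self).congr_fun hIco.symm measurableSet_Ico)
      (hG.integrableOn_Icc.congr_fun hIcc.symm measurableSet_Icc),
    setIntegral_congr_fun measurableSet_Ico hIco, setIntegral_congr_fun measurableSet_Icc hIcc,
    integral_Ico_eq_integral_Ioc, integral_Icc_eq_integral_Ioc,
    ← intervalIntegral.integral_of_le hs.1, ← intervalIntegral.integral_of_le hs.2]

theorem integral_mul_sub_half_of_mem_setA {s0 sf v0 vf : ℝ} {x : Lp ℝ 2 mu01}
    (hx : x ∈ setA s0 sf v0 vf) :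
    ∫ t, (t - 1 / 2) * x t ∂mu01 = (vf - v0) / 2 - (sf - s0 - v0) := by
  have hsplit : (fun t => (t - 1 / 2) * x t) = fun t => 1 / 2 * x t - (1 - t) * x t := by
    funext t; ring
  rw [hsplit, integral_sub (((Lp.memLp x).integrable one_le_two).const_mul _)
      (integrable_continuous_mul_coeFn (by fun_prop) x), integral_const_mul, hx.1, hx.2]
  ring

theorem inner_eq_of_mem_setA {s0 sf v0 vf c : ℝ} {ℓ x : Lp ℝ 2 mu01}
    (hℓ : ℓ =ᵐ[mu01] fun t => c * (t - 1 / 2)) (hx : x ∈ setA s0 sf v0 vf) :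
    inner ℝ ℓ x = c * ((vf - v0) / 2 - (sf - s0 - v0)) := by
  rw [L2.inner_def, ← integral_mul_sub_half_of_mem_setA hx, ← integral_const_mul]
  refine integral_congr_ae (hℓ.mono fun t ht => ?_)
  dsimp only
  rw [Real.inner_apply, ht, mul_assoc]

noncomputable def bangBang (r t : ℝ) : ℝ := if t < 1 / 2 then r else -r

theorem abs_bangBang (r t : ℝ) : |bangBang r t| = |r| := by
  unfold bangBang; split_ifs <;> simp

theorem memLp_bangBang (r : ℝ) (p : ENNReal) : MemLp (bangBang r) p mu01 :=
  MemLp.of_bound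
    (Measurable.ite measurableSet_Iio measurable_const measurable_const).aestronglyMeasurable |r|
    (ae_of_all _ fun t => (abs_bangBang r t).le)

theorem mul_bangBang_eq_abs_mul {σ c a : ℝ} (hσc : σ * c = |c|) (t : ℝ) :
    c * (t - 1 / 2) * bangBang (-σ * a) t = |c * (t - 1 / 2)| * a := by
  unfold bangBang
  split_ifs with ht
  · rw [abs_mul, abs_of_neg (a := t - 1 / 2) (by linarith), ← hσc]; ring
  · rw [abs_mul, abs_of_nonneg (a := t - 1 / 2) (by linarith), ← hσc]; ring

theorem integral_bangBang_add_linear (r c : ℝ) :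
    ∫ t, (bangBang r t + c * (t - 1 / 2)) ∂mu01 = 0 := by
  have hquad : (fun t => bangBang r t + c * (t - 1 / 2)) = fun t =>
      if t < 1 / 2 then 0 * t ^ 2 + c * t + (r - c / 2) else 0 * t ^ 2 + c * t + (-r - c / 2) := by
    funext t; unfold bangBang; split_ifs <;> ring
  rw [hquad, integral_mu01_ite (by fun_prop) (by fun_prop) (by norm_num),
    integral_quadratic, integral_quadratic]
  ring

theorem integral_one_sub_mul_bangBang_add_linear (r c : ℝ) :
    ∫ t, (1 - t) * (bangBang r t + c * (t - 1 / 2)) ∂mu01 = r / 4 - c / 12 := by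
  have hquad : (fun t => (1 - t) * (bangBang r t + c * (t - 1 / 2))) = fun t =>
      if t < 1 / 2 then -c * t ^ 2 + (3 * c / 2 - r) * t + (r - c / 2)
      else -c * t ^ 2 + (3 * c / 2 + r) * t + (-r - c / 2) := by
    funext t; unfold bangBang; split_ifs <;> ring
  rw [hquad, integral_mu01_ite (by fun_prop) (by fun_prop) (by norm_num),
    integral_quadratic, integral_quadratic]
  ring

theorem inner_sub_nonneg_of_mem_setB {σ c a : ℝ} (hσc : σ * c = |c|) {ℓ uB y : Lp ℝ 2 mu01}
    (hℓ : ℓ =ᵐ[mu01] fun t => c * (t - 1 / 2)) (huB : uB =ᵐ[mu01] bangBang (-σ * a))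
    (hy : y ∈ setB a) : 0 ≤ inner ℝ ℓ (uB - y) := by
  rw [L2.inner_def]
  refine integral_nonneg_of_ae ?_
  filter_upwards [hℓ, huB, Lp.coeFn_sub uB y, hy] with t hℓt huBt hsubt hyt
  have hle : c * (t - 1 / 2) * y t ≤ |c * (t - 1 / 2)| * a :=
    calc c * (t - 1 / 2) * y t ≤ |c * (t - 1 / 2)| * |y t| := by
          rw [← abs_mul]; exact le_abs_self _
      _ ≤ |c * (t - 1 / 2)| * a := by gcongr
  rw [Pi.zero_apply, Real.inner_apply, hℓt, hsubt, Pi.sub_apply, huBt, mul_sub,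
    mul_bangBang_eq_abs_mul hσc]
  linarith

theorem abs_eq_one_and_mul_eq_abs_of_sign {K a σ : ℝ} (hbig : |4 * K| > a)
    (hσ1 : 4 * K > a → σ = 1) (hσ2 : 4 * K < -a → σ = -1) :
    |σ| = 1 ∧ σ * (12 * K - 3 * σ * a) = |12 * K - 3 * σ * a| := by
  rcases lt_abs.1 hbig with h | h
  · rw [hσ1 h, abs_of_nonneg (a := 12 * K - 3 * 1 * a) (by linarith)]; norm_num
  · rw [hσ2 (by linarith), abs_of_nonpos (a := 12 * K - 3 * -1 * a) (by linarith)]; norm_num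

/-- Best approximation solution for the infeasible problem in the case v₀ = v_f:
bang–bang control with switching time 1/2, with r = -σ·a and
c₁ = 12·(v_f + s₀ - s_f) - 3·σ·a. -/
theorem stmt_8 (s0 sf v0 vf a : ℝ) (ha : 0 < a) (hv : v0 = vf)
    (hbig : |4 * (vf + s0 - sf)| > a)
    (σ : ℝ) (hσ1 : 4 * (vf + s0 - sf) > a → σ = 1)
    (hσ2 : 4 * (vf + s0 - sf) < -a → σ = -1) :
    ∃ uA uB : Lp ℝ 2 mu01,
      (∀ᵐ t ∂mu01, uB t = if t < 1 / 2 then -σ * a else -(-σ * a)) ∧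
      (∀ᵐ t ∂mu01, uA t = uB t + (12 * (vf + s0 - sf) - 3 * σ * a) * (t - 1 / 2)) ∧
      uA ∈ setA s0 sf v0 vf ∧ uB ∈ setB a ∧
      ∀ x ∈ setA s0 sf v0 vf, ∀ y ∈ setB a, ‖uA - uB‖ ≤ ‖x - y‖ := by
  set c := 12 * (vf + s0 - sf) - 3 * σ * a
  obtain ⟨hσ, hσc⟩ := abs_eq_one_and_mul_eq_abs_of_sign hbig hσ1 hσ2
  set uB := (memLp_bangBang (-σ * a) 2).toLp
  have huB : uB =ᵐ[mu01] bangBang (-σ * a) := MemLp.coeFn_toLp _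
  set ℓ := ((by fun_prop : Continuous fun t : ℝ => c * (t - 1 / 2)).memLp_mu01 2).toLp
  have hℓ : ℓ =ᵐ[mu01] fun t => c * (t - 1 / 2) := MemLp.coeFn_toLp _
  have huA : uB + ℓ =ᵐ[mu01] fun t => bangBang (-σ * a) t + c * (t - 1 / 2) := by
    filter_upwards [Lp.coeFn_add uB ℓ, huB, hℓ] with t hadd hBt hℓt
    rw [hadd, Pi.add_apply, hBt, hℓt]
  have huA_mem : uB + ℓ ∈ setA s0 sf v0 vf := by
    constructor
    · rw [integral_congr_ae huA, integral_bangBang_add_linear, hv, sub_self]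
    · rw [integral_congr_ae (huA.mono fun t ht => by rw [ht]),
        integral_one_sub_mul_bangBang_add_linear, hv]
      ring
  refine ⟨uB + ℓ, uB, huB, ?_, huA_mem, ?_, fun x hx y hy => ?_⟩
  · filter_upwards [huA, huB] with t hAt hBt
    rw [hAt, hBt]
  · filter_upwards [huB] with t hBt
    rw [hBt, abs_bangBang, abs_mul, abs_neg, hσ, one_mul, abs_of_pos ha]
  · refine norm_sub_le_norm_sub_of_inner_nonneg ?_ ?_ <;> rw [add_sub_cancel_left]
    · rw [inner_sub_right, inner_eq_of_mem_setA hℓ hx, inner_eq_of_mem_setA hℓ huA_mem, sub_self]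
    · exact inner_sub_nonneg_of_mem_setB hσc hℓ huB hy
end

section
/- Let s₀, s_f, v₀, v_f be real numbers with s_f − s₀ ≠ (v₀ + v_f)/2, and let c₁, t_s be real numbers satisfying the two equations with r = 0, namely −c₁·t_s + c₁/2 − v_f + v₀ = 0 and −c₁·t_s² + (v₀ − v_f + c₁)·t_s − c₁/3 + v_f + s₀ − s_f = 0. Then t_s = (2·v₀ + v_f − 3·(s_f − s₀)) / (3·(v₀ + v_f) − 6·(s_f − s₀)). (This is the limiting value of the switching time as the control bound a tends to 0.) -/
open MeasureTheory

/-- The limiting value of the switching time as the control bound a tends to 0. -/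
theorem stmt_10 (s0 sf v0 vf c1 ts : ℝ) (hs : sf - s0 ≠ (v0 + vf) / 2)
    (h1 : -c1 * ts + c1 / 2 - vf + v0 = 0)
    (h2 : -c1 * ts ^ 2 + (v0 - vf + c1) * ts - c1 / 3 + vf + s0 - sf = 0) :
    ts = (2 * v0 + vf - 3 * (sf - s0)) / (3 * (v0 + vf) - 6 * (sf - s0)) := by
  have hD : 3 * (v0 + vf) - 6 * (sf - s0) ≠ 0 := by
    intro h; apply hs; linarith
  rw [eq_div_iff hD]
  linear_combination (6*ts - 6*ts^2 - 2) * h1 + (6*ts - 3) * h2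
end

section
/- Let s₀, s_f, v₀, v_f, a, c₁, t_s be real numbers with v₀ = v_f, a > 0 and c₁ ≠ 0, and set r := −sgn(c₁)·a. If the two equations (2r − c₁)·t_s + c₁/2 − v_f + v₀ − r = 0 and (r − c₁)·t_s² + (v₀ − v_f + c₁ − r)·t_s − c₁/3 + r/2 + v_f + s₀ − s_f = 0 hold, then t_s = 1/2 and c₁ = 12·(v_f + s₀ − s_f) − 3·sgn(c₁)·a. -/
open MeasureTheory

/-- In the case v₀ = v_f, the solution of the switching-time system is t_s = 1/2 and
c₁ = 12·(v_f + s₀ - s_f) - 3·sgn(c₁)·a. -/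
theorem stmt_12 (s0 sf v0 vf a c1 ts : ℝ) (hv : v0 = vf) (ha : 0 < a) (hc1 : c1 ≠ 0)
    (h1 : (2 * (-(Real.sign c1) * a) - c1) * ts + c1 / 2 - vf + v0
        - (-(Real.sign c1) * a) = 0)
    (h2 : ((-(Real.sign c1) * a) - c1) * ts ^ 2
        + (v0 - vf + c1 - (-(Real.sign c1) * a)) * ts
        - c1 / 3 + (-(Real.sign c1) * a) / 2 + vf + s0 - sf = 0) :
    ts = 1 / 2 ∧ c1 = 12 * (vf + s0 - sf) - 3 * Real.sign c1 * a := by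
  subst hv
  rcases hc1.lt_or_gt with h | h
  · rw [Real.sign_of_neg h] at h1 h2 ⊢
    have hts : ts = 1 / 2 := by
      have hne : (2 * (- (-1 : ℝ) * a) - c1) ≠ 0 := by nlinarith
      have : (2 * (- (-1 : ℝ) * a) - c1) * (ts - 1 / 2) = 0 := by linarith
      have := mul_eq_zero.mp this
      rcases this with h' | h'
      · exact absurd h' hne
      · linarith
    subst hts
    constructor
    · rfl
    · nlinarith [h2]
  · rw [Real.sign_of_pos h] at h1 h2 ⊢
    have hts : ts = 1 / 2 := by
      have hne : (2 * (- (1 : ℝ) * a) - c1) ≠ 0 := by nlinarith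
      have : (2 * (- (1 : ℝ) * a) - c1) * (ts - 1 / 2) = 0 := by linarith
      have := mul_eq_zero.mp this
      rcases this with h' | h'
      · exact absurd h' hne
      · linarith
    subst hts
    constructor
    · rfl
    · nlinarith [h2]
end
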